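/- A subset C of an unsatisfiable finite knowledge base KB is an MCS if and only if C is a minimal hitting set of the collection of all MUSes of KB. -/

import Mathlib

/-- An interpretation assigns Boolean values to propositional variables. -/
abbrev Interp := ℕ → Bool
/-- A formula is identified with its semantics: the set of interpretations satisfying it. -/
abbrev Form := Interp → Prop

/-- An interpretation satisfies a set of formulas (interpreted conjunctively). -/
def Satisfies (i : Interp) (S : Set Form) : Prop := ∀ f ∈ S, f i
/-- A set of formulas is satisfiable. -/
def Sat (S : Set Form) : Prop := ∃ i, Satisfies i S
/-- Classical entailment: every model of S is a model of φ. -/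
def Entails (S : Set Form) (φ : Form) : Prop := ∀ i, Satisfies i S → φ i
/-- Negation of a formula. -/
def FNeg (φ : Form) : Form := fun i => ¬ φ i
/-- Minimal unsatisfiable subset of KB. -/
def IsMUS (KB M : Set Form) : Prop := M ⊆ KB ∧ ¬ Sat M ∧ ∀ M' ⊂ M, Sat M'
/-- Minimal correction set of KB. -/
def IsMCS (KB C : Set Form) : Prop := C ⊆ KB ∧ Sat (KB \ C) ∧ ∀ C' ⊂ C, ¬ Sat (KB \ C')
/-- H hits every member of Γ. -/
def HittingSet (Γ : Set (Set Form)) (H : Set Form) : Prop := ∀ S ∈ Γ, (H ∩ S).Nonempty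
/-- Minimal hitting set (under inclusion). -/
def MinHittingSet (Γ : Set (Set Form)) (H : Set Form) : Prop :=
  HittingSet Γ H ∧ ∀ H' ⊂ H, ¬ HittingSet Γ H'
/-- ε is a support for φ from KB: inclusion-minimal subset of KB entailing φ. -/
def IsSupport (KB : Set Form) (φ : Form) (ε : Set Form) : Prop :=
  ε ⊆ KB ∧ Entails ε φ ∧ ∀ ε' ⊂ ε, ¬ Entails ε' φ

/-!
Over a finite knowledge base, `D` hits every MUS exactly when `KB \ D` is satisfiable. Hence MCSes
and minimal hitting sets of the MUSes are the same thing: the inclusion-minimal `D ⊆ KB` whose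
removal restores satisfiability.
-/

lemma Sat.mono {S T : Set Form} (hT : Sat T) (hST : S ⊆ T) : Sat S :=
  let ⟨i, hi⟩ := hT
  ⟨i, fun f hf => hi f (hST hf)⟩

lemma exists_isMUS_subset {KB S : Set Form} (hfin : S.Finite) (hSKB : S ⊆ KB) (hS : ¬ Sat S) :
    ∃ M ⊆ S, IsMUS KB M := by
  have hfam : {M | M ⊆ S ∧ ¬ Sat M}.Finite :=
    hfin.finite_subsets.subset fun _ hM => hM.1
  obtain ⟨M, -, ⟨hMS, hM⟩, hmin⟩ := hfam.exists_le_minimal (a := S) ⟨subset_rfl, hS⟩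
  refine ⟨M, hMS, hMS.trans hSKB, hM, fun M' hM'M => ?_⟩
  by_contra hM'
  exact hM'M.2 (hmin ⟨hM'M.1.trans hMS, hM'⟩ hM'M.1)

/-- An unsatisfiable `KB \ D` would contain a MUS disjoint from `D`. -/
lemma hittingSet_isMUS_iff_sat_sdiff {KB : Set Form} (hfin : KB.Finite) (D : Set Form) :
    HittingSet {M | IsMUS KB M} D ↔ Sat (KB \ D) := by
  constructor
  · intro hhit
    by_contra hunsat
    obtain ⟨M, hMsub, hM⟩ := exists_isMUS_subset hfin.sdiff Set.sdiff_subset hunsat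
    obtain ⟨f, hfD, hfM⟩ := hhit M hM
    exact (hMsub hfM).2 hfD
  · intro hsat M hM
    by_contra hdisj
    exact hM.2.1 (hsat.mono fun f hfM => ⟨hM.1 hfM, fun hfD => hdisj ⟨f, hfD, hfM⟩⟩)

theorem stmt5_general (KB C : Set Form) (hfin : KB.Finite) (hsub : C ⊆ KB) :
    IsMCS KB C ↔ MinHittingSet {M | IsMUS KB M} C := by
  simp only [IsMCS, MinHittingSet, hittingSet_isMUS_iff_sat_sdiff hfin]
  exact and_iff_right hsub

/-- C ⊆ KB is an MCS iff it is a minimal hitting set of the collection of all MUSes of KB. -/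
theorem stmt5 (KB C : Set Form) (hfin : KB.Finite) (hunsat : ¬ Sat KB) (hsub : C ⊆ KB) :
    IsMCS KB C ↔ MinHittingSet {M | IsMUS KB M} C :=
  stmt5_general KB C hfin hsub
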